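/- Let X̄ = X̄^T ≥ 0 be a solution of the CGCARE and let A_X̄ = A − B R† (S^T + B^T X̄). Then for the feedback control u(t) = −R†(S^T + B^T X̄) x(t) applied to ẋ = Ax + Bu with x(0) = x₀, the quadratic cost J = ∫₀^∞ [x^T, u^T] Π [x; u] dt satisfies J ≤ x₀^T X̄ x₀ (in particular it is finite). -/

import Mathlib

/-!
Along the closed loop the Riccati equation, completed to a square, turns the running cost into
`-(d/dt) x(t)ᵀ X̄ x(t)`. The running cost is nonnegative because `Π ≥ 0`, so `x(t)ᵀ X̄ x(t)`
decreases to a limit `≥ 0`, and the cost over `(0, ∞)` is `x₀ᵀ X̄ x₀` minus that limit.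
-/

open Matrix MeasureTheory

/-- The four Moore–Penrose conditions for `Rd` being the pseudo-inverse of `R`. -/
def IsMoorePenroseInv {m : ℕ} (R Rd : Matrix (Fin m) (Fin m) ℝ) : Prop :=
  R * Rd * R = R ∧ Rd * R * Rd = Rd ∧ (R * Rd)ᵀ = R * Rd ∧ (Rd * R)ᵀ = Rd * R

namespace IsMoorePenroseInv

variable {m : ℕ} {R Rd : Matrix (Fin m) (Fin m) ℝ}

theorem transpose (h : IsMoorePenroseInv R Rd) : IsMoorePenroseInv Rᵀ Rdᵀ := by
  obtain ⟨h₁, h₂, h₃, h₄⟩ := h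
  refine ⟨?_, ?_, ?_, ?_⟩
  · rw [← transpose_mul, ← transpose_mul, ← mul_assoc, h₁]
  · rw [← transpose_mul, ← transpose_mul, ← mul_assoc, h₂]
  · rw [← transpose_mul, h₄, h₄]
  · rw [← transpose_mul, h₃, h₃]

theorem unique {Y Z : Matrix (Fin m) (Fin m) ℝ}
    (hY : IsMoorePenroseInv R Y) (hZ : IsMoorePenroseInv R Z) : Y = Z := by
  obtain ⟨hY₁, hY₂, hY₃, hY₄⟩ := hY
  obtain ⟨hZ₁, hZ₂, hZ₃, hZ₄⟩ := hZ
  have hRY : R * Y = R * Z :=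
    calc R * Y = (R * Z * R * Y)ᵀ := by rw [hZ₁, hY₃]
      _ = R * Y * (R * Z) := by rw [mul_assoc (R * Z), transpose_mul, hY₃, hZ₃]
      _ = R * Z := by rw [← mul_assoc, hY₁]
  have hYR : Y * R = Z * R :=
    calc Y * R = (Y * (R * Z * R))ᵀ := by rw [hZ₁, hY₄]
      _ = Z * R * (Y * R) := by rw [mul_assoc, ← mul_assoc, transpose_mul, hY₄, hZ₄]
      _ = Z * R := by rw [mul_assoc, ← mul_assoc R, hY₁]
  calc Y = Y * R * Y := hY₂.symm
    _ = Z * R * Z := by rw [mul_assoc, hRY, ← mul_assoc, hYR]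
    _ = Z := hZ₂

theorem transpose_eq_self (hR : Rᵀ = R) (h : IsMoorePenroseInv R Rd) : Rdᵀ = Rd :=
  (hR ▸ h.transpose).unique h

end IsMoorePenroseInv

section ClosedLoop

variable {ι κ : Type*} [Fintype ι] [Fintype κ]

theorem cost_matrix_eq_neg_lyapunov_of_riccati {A X Q : Matrix ι ι ℝ} {B S : Matrix ι κ ℝ}
    {R Rd : Matrix κ κ ℝ} {K : Matrix κ ι ℝ} (hRd : Rdᵀ = Rd) (hRdRRd : Rd * R * Rd = Rd)
    (hXsym : Xᵀ = X) (hric : X * A + Aᵀ * X - (S + X * B) * Rd * (Sᵀ + Bᵀ * X) + Q = 0)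
    (hK : K = Rd * (Sᵀ + Bᵀ * X)) :
    Q - S * K - Kᵀ * Sᵀ + Kᵀ * (R * K) = -(X * (A - B * K) + (A - B * K)ᵀ * X) := by
  set P := (S + X * B) * Rd * (Sᵀ + Bᵀ * X)
  have hKt : Kᵀ = (S + X * B) * Rd := by
    rw [hK, transpose_mul, hRd, transpose_add, transpose_mul, transpose_transpose,
      transpose_transpose, hXsym]
  have hSK : S * K = P - X * (B * K) := by
    rw [eq_sub_iff_add_eq, ← Matrix.mul_assoc, ← Matrix.add_mul, hK, ← Matrix.mul_assoc]
  have hKS : Kᵀ * Sᵀ = P - Kᵀ * Bᵀ * X := by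
    rw [eq_sub_iff_add_eq, Matrix.mul_assoc Kᵀ, ← Matrix.mul_add, hKt]
  have hKRK : Kᵀ * (R * K) = P := by
    rw [hKt, hK]
    simp only [← Matrix.mul_assoc]
    rw [Matrix.mul_assoc (S + X * B) Rd R, Matrix.mul_assoc (S + X * B) (Rd * R) Rd, hRdRRd]
  have hQ : Q = P - X * A - Aᵀ * X := by
    rw [← sub_eq_zero, ← hric]; abel
  rw [hSK, hKS, hKRK, hQ, transpose_sub, transpose_mul]
  noncomm_ring

theorem fromBlocks_quadForm_nonneg {Q : Matrix ι ι ℝ} {S : Matrix ι κ ℝ} {R : Matrix κ κ ℝ}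
    (hPi : (fromBlocks Q S Sᵀ R).PosSemidef) (v : ι → ℝ) (w : κ → ℝ) :
    0 ≤ v ⬝ᵥ (Q *ᵥ v) + v ⬝ᵥ (S *ᵥ w) + w ⬝ᵥ (Sᵀ *ᵥ v) + w ⬝ᵥ (R *ᵥ w) := by
  simpa [fromBlocks_mulVec, sumElim_dotProduct_sumElim, dotProduct_add, add_assoc] using
    hPi.dotProduct_mulVec_nonneg (Sum.elim v w)

theorem quadForm_feedback_eq (Q : Matrix ι ι ℝ) (S : Matrix ι κ ℝ) (R : Matrix κ κ ℝ)
    (K : Matrix κ ι ℝ) (v : ι → ℝ) :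
    v ⬝ᵥ (Q *ᵥ v) + v ⬝ᵥ (S *ᵥ -(K *ᵥ v)) + -(K *ᵥ v) ⬝ᵥ (Sᵀ *ᵥ v)
      + -(K *ᵥ v) ⬝ᵥ (R *ᵥ -(K *ᵥ v))
    = v ⬝ᵥ ((Q - S * K - Kᵀ * Sᵀ + Kᵀ * (R * K)) *ᵥ v) := by
  have hKv (w : κ → ℝ) : (K *ᵥ v) ⬝ᵥ w = v ⬝ᵥ (Kᵀ *ᵥ w) := by
    rw [dotProduct_mulVec, vecMul_transpose]
  simp only [mulVec_neg, dotProduct_neg, neg_dotProduct, neg_neg, ← mulVec_mulVec, sub_mulVec,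
    add_mulVec, dotProduct_sub, dotProduct_add, hKv]
  ring

end ClosedLoop

section Calculus

variable {ι : Type*} [Fintype ι]

theorem HasDerivAt.dotProduct {x y : ℝ → ι → ℝ} {x' y' : ι → ℝ} {t : ℝ}
    (hx : HasDerivAt x x' t) (hy : HasDerivAt y y' t) :
    HasDerivAt (fun s => x s ⬝ᵥ y s) (x' ⬝ᵥ y t + x t ⬝ᵥ y') t := by
  have h := HasDerivAt.fun_sum (u := Finset.univ) fun i _ =>
    (hasDerivAt_pi.1 hx i).fun_mul (hasDerivAt_pi.1 hy i)
  rwa [Finset.sum_add_distrib] at h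

theorem HasDerivAt.const_mulVec {κ : Type*} [Fintype κ] (P : Matrix κ ι ℝ) {x : ℝ → ι → ℝ}
    {x' : ι → ℝ} {t : ℝ} (hx : HasDerivAt x x' t) : HasDerivAt (fun s => P *ᵥ x s) (P *ᵥ x') t :=
  P.mulVecLin.toContinuousLinearMap.hasFDerivAt.comp_hasDerivAt t hx

theorem hasDerivAt_quadForm_of_linearODE {x : ℝ → ι → ℝ} {M : Matrix ι ι ℝ} {t : ℝ}
    (P : Matrix ι ι ℝ) (hx : HasDerivAt x (M *ᵥ x t) t) :
    HasDerivAt (fun s => x s ⬝ᵥ (P *ᵥ x s)) (x t ⬝ᵥ ((P * M + Mᵀ * P) *ᵥ x t)) t := by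
  convert hx.dotProduct (hx.const_mulVec P) using 1
  rw [add_mulVec, dotProduct_add, add_comm, ← mulVec_mulVec, ← mulVec_mulVec, dotProduct_mulVec,
    vecMul_transpose]

variable [DecidableEq ι]

theorem hasDerivAt_exp_smul_mulVec (M : Matrix ι ι ℝ) (v : ι → ℝ) (t : ℝ) :
    HasDerivAt (fun s => NormedSpace.exp (s • M) *ᵥ v)
      (M *ᵥ (NormedSpace.exp (t • M) *ᵥ v)) t := by
  -- `NormedSpace.exp` only depends on the topology, so any algebra norm may be chosen here.
  let _ := Matrix.linftyOpNormedRing (n := ι) (α := ℝ)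
  let _ := Matrix.linftyOpNormedAlgebra (n := ι) (R := ℝ) (α := ℝ)
  let L : Matrix ι ι ℝ →L[ℝ] ι → ℝ :=
    (LinearMap.applyₗ v ∘ₗ Matrix.toLin'.toLinearMap).toContinuousLinearMap
  have h := L.hasFDerivAt.comp_hasDerivAt t (hasDerivAt_exp_smul_const' M t)
  rw [mulVec_mulVec]
  exact h

end Calculus

theorem integrableOn_Ioi_and_integral_le_of_hasDerivAt {f g : ℝ → ℝ} (a : ℝ)
    (hderiv : ∀ t, HasDerivAt g (-f t) t) (hf : ∀ t, 0 ≤ f t) (hg : ∀ t, 0 ≤ g t) :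
    IntegrableOn f (Set.Ioi a) ∧ ∫ t in Set.Ioi a, f t ≤ g a := by
  have hderiv' : ∀ t, HasDerivAt (-g) (f t) t := fun t => by simpa using (hderiv t).neg
  have hmono : Monotone (-g) := monotone_of_hasDerivAt_nonneg hderiv' hf
  have hbdd : BddAbove (Set.range (-g)) := ⟨0, by rintro _ ⟨t, rfl⟩; simpa using hg t⟩
  have hlim := tendsto_atTop_ciSup hmono hbdd
  refine ⟨integrableOn_Ioi_deriv_of_nonneg' (fun t _ => hderiv' t) (fun t _ => hf t) hlim, ?_⟩
  rw [integral_Ioi_of_hasDerivAt_of_nonneg' (fun t _ => hderiv' t) (fun t _ => hf t) hlim]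
  have : ⨆ t, (-g) t ≤ 0 := ciSup_le fun t => by simpa using hg t
  simp only [Pi.neg_apply] at this ⊢
  linarith

theorem feedback_cost_finite_and_bounded_general {n m : ℕ}
    (A : Matrix (Fin n) (Fin n) ℝ) (B S : Matrix (Fin n) (Fin m) ℝ)
    (Q : Matrix (Fin n) (Fin n) ℝ) (R Rd : Matrix (Fin m) (Fin m) ℝ)
    (hR : Rᵀ = R)
    (hMP : IsMoorePenroseInv R Rd)
    (hPi : (Matrix.fromBlocks Q S Sᵀ R).PosSemidef)
    (X : Matrix (Fin n) (Fin n) ℝ) (hXsym : Xᵀ = X) (hXpsd : X.PosSemidef)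
    (hric : X * A + Aᵀ * X - (S + X * B) * Rd * (Sᵀ + Bᵀ * X) + Q = 0)
    (x₀ : Fin n → ℝ)
    (K : Matrix (Fin m) (Fin n) ℝ) (hK : K = Rd * (Sᵀ + Bᵀ * X))
    (x : ℝ → Fin n → ℝ)
    (hx : ∀ t : ℝ, x t = NormedSpace.exp (t • (A - B * K)) *ᵥ x₀)
    (u : ℝ → Fin m → ℝ) (hu : ∀ t : ℝ, u t = -(K *ᵥ x t))
    (f : ℝ → ℝ)
    (hf : ∀ t : ℝ, f t =
      x t ⬝ᵥ (Q *ᵥ x t) + x t ⬝ᵥ (S *ᵥ u t) + u t ⬝ᵥ (Sᵀ *ᵥ x t) + u t ⬝ᵥ (R *ᵥ u t)) :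
    IntegrableOn f (Set.Ioi 0) volume ∧
      ∫ t in Set.Ioi (0 : ℝ), f t ≤ x₀ ⬝ᵥ (X *ᵥ x₀) := by
  set AK := A - B * K
  have hxd (t : ℝ) : HasDerivAt x (AK *ᵥ x t) t := by
    rw [funext hx]
    exact hasDerivAt_exp_smul_mulVec AK x₀ t
  have hcost (t : ℝ) : f t = -(x t ⬝ᵥ ((X * AK + AKᵀ * X) *ᵥ x t)) := by
    rw [hf, hu, quadForm_feedback_eq,
      cost_matrix_eq_neg_lyapunov_of_riccati (hMP.transpose_eq_self hR) hMP.2.1 hXsym hric hK,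
      neg_mulVec, dotProduct_neg]
  have hx0 : x 0 = x₀ := by rw [hx, zero_smul, NormedSpace.exp_zero, one_mulVec]
  rw [← hx0]
  refine integrableOn_Ioi_and_integral_le_of_hasDerivAt 0 (fun t => ?_) (fun t => ?_)
    fun t => by simpa only [star_trivial] using hXpsd.dotProduct_mulVec_nonneg (x t)
  · rw [hcost, neg_neg]
    exact hasDerivAt_quadForm_of_linearODE X (hxd t)
  · rw [hf, hu]
    exact fromBlocks_quadForm_nonneg hPi _ _

/-- If `X̄ = X̄ᵀ ≥ 0` solves the CGCARE, then the feedback control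
`u = −R†(Sᵀ + Bᵀ X̄) x` applied to `ẋ = Ax + Bu`, `x(0) = x₀` (so that
`x(t) = exp(A_X̄ t) x₀` with `A_X̄ = A − B R†(Sᵀ + Bᵀ X̄)`) yields a cost
`J = ∫₀^∞ [xᵀ uᵀ] Π [x; u] dt` which is finite and satisfies `J ≤ x₀ᵀ X̄ x₀`. -/
theorem feedback_cost_finite_and_bounded {n m : ℕ}
    (A : Matrix (Fin n) (Fin n) ℝ) (B S : Matrix (Fin n) (Fin m) ℝ)
    (Q : Matrix (Fin n) (Fin n) ℝ) (R Rd : Matrix (Fin m) (Fin m) ℝ)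
    (hQ : Qᵀ = Q) (hR : Rᵀ = R) (hRpsd : R.PosSemidef)
    (hMP : IsMoorePenroseInv R Rd)
    (hPi : (Matrix.fromBlocks Q S Sᵀ R).PosSemidef)
    (X : Matrix (Fin n) (Fin n) ℝ) (hXsym : Xᵀ = X) (hXpsd : X.PosSemidef)
    (hric : X * A + Aᵀ * X - (S + X * B) * Rd * (Sᵀ + Bᵀ * X) + Q = 0)
    (hker : ∀ v : Fin m → ℝ, R *ᵥ v = 0 → (S + X * B) *ᵥ v = 0)
    (x₀ : Fin n → ℝ)
    (K : Matrix (Fin m) (Fin n) ℝ) (hK : K = Rd * (Sᵀ + Bᵀ * X))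
    (x : ℝ → Fin n → ℝ)
    (hx : ∀ t : ℝ, x t = NormedSpace.exp (t • (A - B * K)) *ᵥ x₀)
    (u : ℝ → Fin m → ℝ) (hu : ∀ t : ℝ, u t = -(K *ᵥ x t))
    (f : ℝ → ℝ)
    (hf : ∀ t : ℝ, f t =
      x t ⬝ᵥ (Q *ᵥ x t) + x t ⬝ᵥ (S *ᵥ u t) + u t ⬝ᵥ (Sᵀ *ᵥ x t) + u t ⬝ᵥ (R *ᵥ u t)) :
    IntegrableOn f (Set.Ioi 0) volume ∧
      ∫ t in Set.Ioi (0 : ℝ), f t ≤ x₀ ⬝ᵥ (X *ᵥ x₀) :=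
  feedback_cost_finite_and_bounded_general A B S Q R Rd hR hMP hPi X hXsym hXpsd hric x₀ K hK x hx u
    hu f hf
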